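/- arXiv:1904.08992 — 2 statements merged into one kernel-verified Lean document; each statement's English description precedes it below -/
import Mathlib

section
/- Spectral gap of the Grover interpolation: for H(s) = (1−s)(I − |φ⟩⟨φ|) + s(I − |m⟩⟨m|) on ℂⁿ, restricted to the 2-dimensional subspace spanned by |φ⟩ and |m⟩, the two eigenvalues λ₋(s) ≤ λ₊(s) satisfy λ₊(s) − λ₋(s) = √(1 − 4s(1−s)(1 − 1/n)), and in particular the minimum gap over s ∈ [0,1] is 1/√n, attained at s = 1/2. -/
/-!
On `span {φ, e}` with `‖φ‖ = ‖e‖ = 1` and real overlap `a = ⟨φ, e⟩`, the Hamiltonian maps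
`φ ↦ s (φ - a e)` and `e ↦ (1 - s) (e - a φ)`, so in the basis `(φ, e)` it is the real `2 × 2`
matrix `!![s, -(1 - s) a; -s a, 1 - s]` of trace `1` and determinant `s (1 - s) (1 - a²)`.
When `a² < 1` the two vectors are independent and its eigenvalues `(1 ± D) / 2`, with
`D² = 1 - 4 s (1 - s) (1 - a²) = a² + (1 - 2 s)² (1 - a²)`, are eigenvalues of `H(s)` on the span.
For the Grover pair `a² = 1 / n`, so the gap `D` is at least `1 / √n`, with equality at `s = 1 / 2`.
-/

open Matrix

namespace GroverInterpolation

theorem exists_eigenvector_fin_two {K : Type*} [Field K] {p q r t μ : K}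
    (h : (p - μ) * (t - μ) - q * r = 0) :
    ∃ x y : K, (x ≠ 0 ∨ y ≠ 0) ∧ p * x + q * y = μ * x ∧ r * x + t * y = μ * y := by
  obtain ⟨v, hv0, hv⟩ := exists_mulVec_eq_zero_iff.mpr
    (by rwa [det_fin_two_of] : (!![p - μ, q; r, t - μ]).det = 0)
  have h₀ := congrFun hv 0
  have h₁ := congrFun hv 1
  simp only [mulVec, dotProduct, Fin.sum_univ_two, of_apply, cons_val', cons_val_zero,
    cons_val_one, cons_val_fin_one, Pi.zero_apply] at h₀ h₁
  refine ⟨v 0, v 1, ?_, by linear_combination h₀, by linear_combination h₁⟩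
  by_contra! hv
  exact hv0 (funext (Fin.forall_fin_two.mpr hv))

section

variable {ι : Type*} [Fintype ι]

theorem star_dotProduct_eq_ofReal {φ e : ι → ℂ} {a : ℝ} (hφe : star φ ⬝ᵥ e = a) :
    star e ⬝ᵥ φ = a := by
  rw [star_dotProduct, hφe, Complex.star_def, Complex.conj_ofReal]

theorem linearIndependent_pair {φ e : ι → ℂ} {a : ℝ} (hφ : star φ ⬝ᵥ φ = 1)
    (he : star e ⬝ᵥ e = 1) (hφe : star φ ⬝ᵥ e = a) (ha : a ^ 2 ≠ 1) :
    LinearIndependent ℂ ![φ, e] := by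
  refine LinearIndependent.pair_iff.mpr fun x y hxy => ?_
  have h₁ : x + y * a = 0 := by
    simpa [dotProduct_add, dotProduct_smul, hφ, hφe] using congrArg (star φ ⬝ᵥ ·) hxy
  have h₂ : x * a + y = 0 := by
    simpa [dotProduct_add, dotProduct_smul, he, star_dotProduct_eq_ofReal hφe]
      using congrArg (star e ⬝ᵥ ·) hxy
  have ha' : (1 - (a : ℂ) ^ 2) ≠ 0 := by exact_mod_cast sub_ne_zero.mpr ha.symm
  have hx : x * (1 - (a : ℂ) ^ 2) = 0 := by linear_combination h₁ - a * h₂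
  have hy : y * (1 - (a : ℂ) ^ 2) = 0 := by linear_combination h₂ - a * h₁
  exact ⟨(mul_eq_zero_iff_right ha').mp hx, (mul_eq_zero_iff_right ha').mp hy⟩

end

variable {ι : Type*} [DecidableEq ι]

noncomputable def hamiltonian (φ e : ι → ℂ) (s : ℝ) : Matrix ι ι ℂ :=
  ((1 - s : ℝ) : ℂ) • (1 - vecMulVec φ (star φ)) + ((s : ℝ) : ℂ) • (1 - vecMulVec e (star e))

theorem hamiltonian_swap (φ e : ι → ℂ) (s : ℝ) :
    hamiltonian e φ (1 - s) = hamiltonian φ e s := by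
  rw [hamiltonian, hamiltonian, sub_sub_cancel, add_comm]

variable [Fintype ι]

theorem hamiltonian_mulVec_left {φ e : ι → ℂ} {a : ℝ} (hφ : star φ ⬝ᵥ φ = 1)
    (heφ : star e ⬝ᵥ φ = a) (s : ℝ) :
    hamiltonian φ e s *ᵥ φ = (s : ℂ) • (φ - (a : ℂ) • e) := by
  simp only [hamiltonian, add_mulVec, smul_mulVec, sub_mulVec, one_mulVec, vecMulVec_mulVec,
    hφ, heφ, op_smul_eq_smul, one_smul, sub_self, smul_zero, zero_add]

theorem hamiltonian_mulVec_right {φ e : ι → ℂ} {a : ℝ} (he : star e ⬝ᵥ e = 1)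
    (hφe : star φ ⬝ᵥ e = a) (s : ℝ) :
    hamiltonian φ e s *ᵥ e = ((1 - s : ℝ) : ℂ) • (e - (a : ℂ) • φ) := by
  rw [← hamiltonian_swap, hamiltonian_mulVec_left he hφe]

theorem exists_eigenvector_mem_span {φ e : ι → ℂ} {a : ℝ} (hφ : star φ ⬝ᵥ φ = 1)
    (he : star e ⬝ᵥ e = 1) (hφe : star φ ⬝ᵥ e = a) (ha : a ^ 2 ≠ 1) {s μ : ℝ}
    (hμ : μ ^ 2 - μ + s * (1 - s) * (1 - a ^ 2) = 0) :
    ∃ v ≠ 0, v ∈ Submodule.span ℂ {φ, e} ∧ hamiltonian φ e s *ᵥ v = (μ : ℂ) • v := by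
  have hμ' : ((s : ℂ) - μ) * ((1 - s : ℂ) - μ) - (-((1 - s) * a)) * (-(s * a)) = 0 := by
    linear_combination (by exact_mod_cast hμ : (μ ^ 2 - μ + s * (1 - s) * (1 - a ^ 2) : ℂ) = 0)
  obtain ⟨x, y, hxy, h₀, h₁⟩ := exists_eigenvector_fin_two hμ'
  refine ⟨x • φ + y • e, ?_, Submodule.mem_span_pair.mpr ⟨_, _, rfl⟩, ?_⟩
  · intro h0
    obtain ⟨hx, hy⟩ := LinearIndependent.pair_iff.mp (linearIndependent_pair hφ he hφe ha) _ _ h0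
    exact hxy.elim (· hx) (· hy)
  · rw [mulVec_add, mulVec_smul, mulVec_smul,
      hamiltonian_mulVec_left hφ (star_dotProduct_eq_ofReal hφe), hamiltonian_mulVec_right he hφe]
    match_scalars
    · linear_combination h₀
    · linear_combination h₁

theorem exists_eigenvalues_sub_eq_sqrt {φ e : ι → ℂ} {a : ℝ} (hφ : star φ ⬝ᵥ φ = 1)
    (he : star e ⬝ᵥ e = 1) (hφe : star φ ⬝ᵥ e = a) (ha : a ^ 2 < 1) (s : ℝ) :
    ∃ lm lp : ℝ, lm ≤ lp ∧
      (∃ v ≠ 0, v ∈ Submodule.span ℂ {φ, e} ∧ hamiltonian φ e s *ᵥ v = (lm : ℂ) • v) ∧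
      (∃ v ≠ 0, v ∈ Submodule.span ℂ {φ, e} ∧ hamiltonian φ e s *ᵥ v = (lp : ℂ) • v) ∧
      lp - lm = √(1 - 4 * s * (1 - s) * (1 - a ^ 2)) := by
  set D := √(1 - 4 * s * (1 - s) * (1 - a ^ 2))
  have hD : D ^ 2 = 1 - 4 * s * (1 - s) * (1 - a ^ 2) :=
    Real.sq_sqrt (by nlinarith [sq_nonneg (1 - 2 * s), sq_nonneg a])
  have hD0 : 0 ≤ D := Real.sqrt_nonneg _
  refine ⟨(1 - D) / 2, (1 + D) / 2, by linarith,
    exists_eigenvector_mem_span hφ he hφe ha.ne (by linear_combination hD / 4),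
    exists_eigenvector_mem_span hφ he hφe ha.ne (by linear_combination hD / 4), by ring⟩

end GroverInterpolation

open GroverInterpolation

theorem sqrt_le_sqrt_one_sub_four_mul_mul (s : ℝ) {x : ℝ} (hx : x ≤ 1) :
    √x ≤ √(1 - 4 * s * (1 - s) * (1 - x)) :=
  Real.sqrt_le_sqrt (by nlinarith [sq_nonneg (1 - 2 * s)])

/-- For `H(s) = (1−s)(I − |φ⟩⟨φ|) + s(I − |m⟩⟨m|)` restricted to the
invariant 2-dimensional subspace spanned by `|φ⟩` and `|m⟩`, the two eigenvalues
`λ₋(s) ≤ λ₊(s)` satisfy `λ₊(s) − λ₋(s) = √(1 − 4s(1−s)(1 − 1/n))`; the minimum gap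
over `s ∈ [0,1]` is `1/√n`, attained at `s = 1/2`. -/
theorem stmt11 (n : ℕ) (hn : 2 ≤ n) (m : Fin n)
    (φ em : Fin n → ℂ)
    (hφ : φ = fun _ => (((Real.sqrt n)⁻¹ : ℝ) : ℂ))
    (hem : em = (Pi.single m 1 : Fin n → ℂ))
    (H : ℝ → Matrix (Fin n) (Fin n) ℂ)
    (hH : ∀ s, H s = ((1 - s : ℝ) : ℂ) • (1 - Matrix.vecMulVec φ (star φ))
        + ((s : ℝ) : ℂ) • (1 - Matrix.single m m (1 : ℂ))) :
    ∀ s ∈ Set.Icc (0 : ℝ) 1,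
      ∃ lm lp : ℝ, lm ≤ lp ∧
        (∃ v : Fin n → ℂ, v ≠ 0 ∧ v ∈ Submodule.span ℂ {φ, em} ∧
          (H s).mulVec v = (lm : ℂ) • v) ∧
        (∃ v : Fin n → ℂ, v ≠ 0 ∧ v ∈ Submodule.span ℂ {φ, em} ∧
          (H s).mulVec v = (lp : ℂ) • v) ∧
        lp - lm = Real.sqrt (1 - 4 * s * (1 - s) * (1 - 1 / n)) ∧
        1 / Real.sqrt n ≤ lp - lm ∧
        (s = 1 / 2 → lp - lm = 1 / Real.sqrt n) := by
  intro s _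
  set a : ℝ := (√n)⁻¹
  have hn0 : (0 : ℝ) < n := by positivity
  have ha2 : a ^ 2 = 1 / n := by rw [inv_pow, Real.sq_sqrt hn0.le, one_div]
  have hφφ : star φ ⬝ᵥ φ = 1 := by
    simp only [hφ, dotProduct, Pi.star_apply, Complex.star_def, Complex.conj_ofReal,
      Finset.sum_const, Finset.card_univ, Fintype.card_fin, nsmul_eq_mul]
    rw [← Complex.ofReal_mul, ← pow_two, ha2]
    push_cast
    exact mul_one_div_cancel (by exact_mod_cast hn0.ne')
  have hee : star em ⬝ᵥ em = 1 := by simp [hem, dotProduct_single]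
  have hφe : star φ ⬝ᵥ em = a := by simp [hem, hφ, dotProduct_single, a]
  have ha : a ^ 2 < 1 := by
    rw [ha2, div_lt_one hn0]
    exact_mod_cast hn
  have hHs : H s = hamiltonian φ em s := by
    rw [hH, hamiltonian, hem, single_eq_single_vecMulVec_single, ← Pi.single_star, star_one]
  obtain ⟨lm, lp, hle, hlm, hlp, hgap⟩ := exists_eigenvalues_sub_eq_sqrt hφφ hee hφe ha s
  rw [ha2] at hgap
  have hsqrt : 1 / √n = √(1 / n) := by rw [one_div, one_div, Real.sqrt_inv]
  refine ⟨lm, lp, hle, hHs ▸ hlm, hHs ▸ hlp, hgap, ?_, fun hs => ?_⟩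
  · rw [hgap, hsqrt]
    exact sqrt_le_sqrt_one_sub_four_mul_mul s (ha2 ▸ ha.le)
  · rw [hgap, hsqrt, hs]
    congr 1
    ring
end

section
/- Generalized Grover final Hamiltonian: let G be a finite graph that is a disjoint union of connected components G₀,…,G_{k−1}, fix a target component G_m, and let V_d be a set of vertices such that every vertex outside G_m is adjacent to exactly one vertex of V_d and no vertex of G_m is adjacent to V_d, with V_d ∩ V(G_m) = ∅. Then the reduced Laplacian H_F = L(G ∪ edges to V_d)_{V∖V_d} has the uniform superposition over V(G_m) as a 0-eigenvector. -/
/-- Generalized Grover final Hamiltonian. For a graph `G` (unit edge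
weights) with target connected component having vertex set `Vm`, marking dummy
vertices so that every vertex outside `Vm` is adjacent to exactly one dummy vertex
(and no vertex of `Vm` is) yields the reduced Laplacian `H_F = L + diag(1_{V∖Vm})`,
which has the uniform superposition over `Vm` as a 0-eigenvector. -/
theorem stmt15 (n : ℕ) (G : SimpleGraph (Fin n)) [DecidableRel G.Adj]
    (L : Matrix (Fin n) (Fin n) ℝ)
    (hL : ∀ u v, L u v = if u = v then (G.degree u : ℝ) else if G.Adj u v then -1 else 0)
    (Vm : Finset (Fin n)) (hVmne : Vm.Nonempty)
    -- `Vm` is a connected component of `G`: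
    (hclosed : ∀ u v, G.Adj u v → (u ∈ Vm ↔ v ∈ Vm))
    (hconn : ∀ u ∈ Vm, ∀ v ∈ Vm, G.Reachable u v)
    (HF : Matrix (Fin n) (Fin n) ℝ)
    (hHF : HF = L + Matrix.diagonal (fun v => if v ∈ Vm then 0 else 1))
    (φ : Fin n → ℝ)
    (hφ : ∀ v, φ v = if v ∈ Vm then (Real.sqrt Vm.card)⁻¹ else 0) :
    HF.mulVec φ = 0 := by
  funext u
  simp only [Matrix.mulVec, dotProduct, hHF, Matrix.add_apply, Matrix.diagonal_apply,
    Pi.zero_apply]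
  set c : ℝ := (Real.sqrt Vm.card)⁻¹ with hc
  by_cases hu : u ∈ Vm
  · have hsum : ∀ v, (L u v + if u = v then (if u ∈ Vm then (0:ℝ) else 1) else 0) * φ v
        = if v ∈ Vm then L u v * c else 0 := by
      intro v
      by_cases hv : v ∈ Vm
      · by_cases huv : u = v
        · subst huv; simp [hφ, hv]
        · simp [hφ, hv, huv]
      · simp [hφ, hv]
    rw [Finset.sum_congr rfl fun v _ => hsum v, Finset.sum_ite_mem, Finset.univ_inter,
      ← Finset.sum_mul]
    have hsplit : ∑ v ∈ Vm, L u v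
        = L u u + ∑ v ∈ Vm.erase u, L u v := by
      rw [Finset.add_sum_erase _ _ hu]
    have hfilter : (Vm.erase u).filter (G.Adj u) = G.neighborFinset u := by
      ext v
      simp only [Finset.mem_filter, Finset.mem_erase, SimpleGraph.mem_neighborFinset]
      constructor
      · rintro ⟨_, h⟩; exact h
      · intro h
        exact ⟨⟨fun hvu => (G.ne_of_adj h) hvu.symm, (hclosed u v h).mp hu⟩, h⟩
    have herase : ∑ v ∈ Vm.erase u, L u v = -(G.degree u : ℝ) := by
      have : ∀ v ∈ Vm.erase u, L u v = if G.Adj u v then (-1:ℝ) else 0 := by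
        intro v hv
        rw [hL]
        rw [if_neg (fun h => (Finset.mem_erase.mp hv).1 h.symm)]
      rw [Finset.sum_congr rfl this, ← Finset.sum_filter, hfilter, Finset.sum_const,
        SimpleGraph.card_neighborFinset_eq_degree]
      simp
    rw [hsplit, herase, hL]
    simp
  · have hzero : ∀ v, (L u v + if u = v then (if u ∈ Vm then (0:ℝ) else 1) else 0) * φ v
        = 0 := by
      intro v
      by_cases hv : v ∈ Vm
      · have huv : u ≠ v := fun h => hu (h ▸ hv)
        have hadj : ¬ G.Adj u v := fun h => hu ((hclosed u v h).mpr hv)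
        rw [hL, if_neg huv, if_neg hadj, if_neg huv]
        ring
      · simp [hφ, hv]
    rw [Finset.sum_congr rfl fun v _ => hzero v, Finset.sum_const_zero]
end
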